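/- Let 𝐀 and 𝐁 be σ-structures with the same iterated degree sequence. Then the partition of (A ∪ B, C_𝐀 ∪ C_𝐁) induced by the stable iterated degrees on the disjoint union 𝐀 ⊔ 𝐁 is an equitable partition in which every class contains equally many elements (resp. constraints) from 𝐀 and from 𝐁; hence 𝐀 and 𝐁 have a common equitable partition. -/

import Mathlib

open Finset BigOperators

variable {σ : Type} [Fintype σ] [DecidableEq σ]

/-- Edge labels of the factor graph of a `σ`-structure: pairs `(S,R)` with
`S ⊆ [ar R]`. -/
abbrev FLab (ar : σ → ℕ) : Type := Σ R : σ, Finset (Fin (ar R))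

/-- The type of iterated degrees (colours) after `n` refinement rounds on the labelled
factor graph. The initial colour (a `Bool`) distinguishes elements from constraints. -/
def FColor (ar : σ → ℕ) : ℕ → Type
  | 0 => Bool
  | n + 1 => FColor ar n × Multiset (FLab ar × FColor ar n)

instance fColorDecEq (ar : σ → ℕ) : ∀ n, DecidableEq (FColor ar n)
  | 0 => inferInstanceAs (DecidableEq Bool)
  | n + 1 =>
      letI := fColorDecEq ar n
      inferInstanceAs (DecidableEq (FColor ar n × Multiset (FLab ar × FColor ar n)))

/-- The constraints of a structure: pairs of a symbol `R` and a tuple in `R`'s relation. -/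
abbrev Cstr (ar : σ → ℕ) {D : Type} (rel : ∀ R : σ, Finset (Fin (ar R) → D)) : Type :=
  Σ R : σ, {x : Fin (ar R) → D // x ∈ rel R}

/-- The label of the factor-graph edge between an element `a` and a constraint `c`. -/
def fLabOf (ar : σ → ℕ) {D : Type} [DecidableEq D] {rel : ∀ R : σ, Finset (Fin (ar R) → D)}
    (a : D) (c : Cstr ar rel) : FLab ar :=
  ⟨c.1, Finset.univ.filter (fun i => c.2.1 i = a)⟩

/-- The iterated degree `δ_n` of a vertex of the labelled factor graph of the structure
`rel` (a vertex is either an element, `Sum.inl`, or a constraint, `Sum.inr`):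
`δ_0` distinguishes elements from constraints and
`δ_{n+1}(v) = (δ_n(v), {{(ℓ_{v,w}, δ_n(w)) : w a factor-graph neighbour of v}})`. -/
def fdeg (ar : σ → ℕ) {D : Type} [Fintype D] [DecidableEq D]
    (rel : ∀ R : σ, Finset (Fin (ar R) → D)) :
    (n : ℕ) → (D ⊕ Cstr ar rel) → FColor ar n
  | 0, Sum.inl _ => false
  | 0, Sum.inr _ => true
  | n + 1, Sum.inl a =>
      (fdeg ar rel n (Sum.inl a),
        ((Finset.univ.filter (fun c : Cstr ar rel => ∃ i, c.2.1 i = a)).val.map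
          (fun c => (fLabOf ar a c, fdeg ar rel n (Sum.inr c)))))
  | n + 1, Sum.inr c =>
      (fdeg ar rel n (Sum.inr c),
        ((Finset.univ.filter (fun a : D => ∃ i, c.2.1 i = a)).val.map
          (fun a => (fLabOf ar a c, fdeg ar rel n (Sum.inl a)))))

/-- Two similar structures have the same iterated degree sequence if, for every `n`,
the multisets of iterated degrees of their factor-graph vertices coincide. -/
def SameIDS (ar : σ → ℕ) {D₁ D₂ : Type} [Fintype D₁] [DecidableEq D₁]
    [Fintype D₂] [DecidableEq D₂]
    (rel₁ : ∀ R : σ, Finset (Fin (ar R) → D₁))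
    (rel₂ : ∀ R : σ, Finset (Fin (ar R) → D₂)) : Prop :=
  ∀ n : ℕ,
    Multiset.map (fdeg ar rel₁ n) Finset.univ.val =
      Multiset.map (fdeg ar rel₂ n) Finset.univ.val

/-- A homomorphism between similar relational structures. -/
def IsHom (ar : σ → ℕ) {DX DA : Type}
    (relX : ∀ R : σ, Finset (Fin (ar R) → DX))
    (relA : ∀ R : σ, Finset (Fin (ar R) → DA))
    (h : DX → DA) : Prop :=
  ∀ (R : σ) (x : Fin (ar R) → DX), x ∈ relX R → (fun i => h (x i)) ∈ relA R
/-- A pair of colourings (of elements by `I` and of constraints by `J`) of a structure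
is an equitable partition with parameters `cpar`, `dpar` if, for every element class,
constraint class and label, the number of constraints of the given class incident to a
fixed element with the given label equals `cpar`, and dually for `dpar`. -/
def IsEquitableRel (ar : σ → ℕ) {D I J : Type} [Fintype D] [DecidableEq D]
    [DecidableEq I] [DecidableEq J]
    (rel : ∀ R : σ, Finset (Fin (ar R) → D))
    (cE : D → I) (cC : Cstr ar rel → J)
    (cpar : I → J → FLab ar → ℕ) (dpar : J → I → FLab ar → ℕ) : Prop :=
  (∀ (a : D) (j : J) (ℓ : FLab ar),
      (Finset.univ.filter (fun c : Cstr ar rel =>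
        cC c = j ∧ (∃ i, c.2.1 i = a) ∧ fLabOf ar a c = ℓ)).card = cpar (cE a) j ℓ) ∧
  (∀ (c : Cstr ar rel) (i : I) (ℓ : FLab ar),
      (Finset.univ.filter (fun a : D =>
        cE a = i ∧ (∃ i', c.2.1 i' = a) ∧ fLabOf ar a c = ℓ)).card = dpar (cC c) i ℓ)

/-! Run colour refinement on the factor graph of the disjoint union of the two structures.
The number of colour classes never decreases and is at most the number of vertices, so some
round up to that number splits no class; and once a round splits no class, no later round does,
because the next colours are then a function of the current ones. At such a stable round `N`
the round-`(N+1)` colour is a function `L` of the round-`N` colour, and `L κ` lists the labelled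
neighbour colours of any vertex of colour `κ`: its counts are the common equitable parameters.
The class sizes agree because equal iterated degree sequences give equal colour multisets, and
the initial colour separates elements from constraints. -/

open Function Multiset

namespace FColor

omit [Fintype σ] [DecidableEq σ]

variable {ar : σ → ℕ} {n : ℕ}

-- `FColor ar (n + 1)` is a product only after unfolding `FColor`, which `rw` does not see through.
def mk (κ : FColor ar n) (s : Multiset (FLab ar × FColor ar n)) : FColor ar (n + 1) := (κ, s)

def prev (κ : FColor ar (n + 1)) : FColor ar n := κ.1

def nbrs (κ : FColor ar (n + 1)) : Multiset (FLab ar × FColor ar n) := κ.2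

@[simp]
theorem prev_mk (κ : FColor ar n) (s : Multiset (FLab ar × FColor ar n)) : (mk κ s).prev = κ :=
  rfl

theorem mk_inj {κ κ' : FColor ar n} {s s' : Multiset (FLab ar × FColor ar n)} :
    mk κ s = mk κ' s' ↔ κ = κ' ∧ s = s' :=
  Prod.mk.injEq _ _ _ _ ▸ Iff.rfl

instance instNonempty : ∀ n, Nonempty (FColor ar n)
  | 0 => ⟨false⟩
  | n + 1 => have ⟨κ⟩ := instNonempty n; ⟨mk κ 0⟩

def initial : ∀ {n : ℕ}, FColor ar n → Bool
  | 0, b => b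
  | _ + 1, κ => initial κ.prev

end FColor

def IsColorRefinement {ar : σ → ℕ} {V : Type*} (nb : V → Multiset (FLab ar × V))
    (f : ∀ n, V → FColor ar n) : Prop :=
  ∀ n v, f (n + 1) v = .mk (f n v) ((nb v).map fun p => (p.1, f n p.2))

theorem exists_le_eq_succ_of_monotone {k : ℕ → ℕ} (hk : Monotone k) {M : ℕ}
    (hM : ∀ n, k n ≤ M) : ∃ n ≤ M, k n = k (n + 1) := by
  by_contra! h
  have grow : ∀ n ≤ M + 1, n ≤ k n := by
    intro n
    induction n with
    | zero => simp
    | succ n ih =>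
      intro hn
      have := ih (by omega)
      have := h n (by omega)
      have : k n ≤ k (n + 1) := hk (by omega)
      omega
  have := grow (M + 1) le_rfl
  have := hM (M + 1)
  omega

namespace IsColorRefinement

variable {ar : σ → ℕ} {V : Type*} {nb : V → Multiset (FLab ar × V)} {f : ∀ n, V → FColor ar n}

section

omit [Fintype σ] [DecidableEq σ]

theorem prev_comp_succ (hf : IsColorRefinement nb f) (n : ℕ) : FColor.prev ∘ f (n + 1) = f n := by
  funext v
  rw [comp_apply, hf n v, FColor.prev_mk]

theorem factorsThrough_succ (hf : IsColorRefinement nb f) {n : ℕ}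
    (h : FactorsThrough (f (n + 1)) (f n)) : FactorsThrough (f (n + 2)) (f (n + 1)) := by
  intro v w hvw
  rw [hf (n + 1) v, hf (n + 1) w, hvw]
  rw [hf n v, hf n w, FColor.mk_inj] at hvw
  obtain ⟨L, hL⟩ := (factorsThrough_iff _).mp h
  have hcomp : (fun p : FLab ar × V => (p.1, f (n + 1) p.2)) =
      (fun q => (q.1, L q.2)) ∘ fun p : FLab ar × V => (p.1, f n p.2) := by
    rw [hL]
    rfl
  rw [hcomp, ← Multiset.map_map, ← Multiset.map_map, hvw.2]

theorem factorsThrough_of_le (hf : IsColorRefinement nb f) {n m : ℕ}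
    (h : FactorsThrough (f (n + 1)) (f n)) (hnm : n ≤ m) : FactorsThrough (f (m + 1)) (f m) :=
  Nat.le_induction h (fun _ _ ih => hf.factorsThrough_succ ih) m hnm

theorem sum_elim {W : Type*} {nb' : W → Multiset (FLab ar × W)} {f' : ∀ n, W → FColor ar n}
    (hf : IsColorRefinement nb f) (hf' : IsColorRefinement nb' f') :
    IsColorRefinement
      (Sum.elim (fun v => (nb v).map (Prod.map id .inl)) (fun w => (nb' w).map (Prod.map id .inr)))
      (fun n => Sum.elim (f n) (f' n)) := by
  rintro n (v | w)
  · simp only [Sum.elim_inl, hf n v, Multiset.map_map]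
    rfl
  · simp only [Sum.elim_inr, hf' n w, Multiset.map_map]
    rfl

end

section

omit [Fintype σ]

variable [Fintype V]

theorem card_image_le_succ (hf : IsColorRefinement nb f) (n : ℕ) :
    #(univ.image (f n)) ≤ #(univ.image (f (n + 1))) := by
  rw [← hf.prev_comp_succ n, ← image_image]
  exact card_image_le

theorem factorsThrough_of_card_image_eq (hf : IsColorRefinement nb f) {n : ℕ}
    (h : #(univ.image (f n)) = #(univ.image (f (n + 1)))) : FactorsThrough (f (n + 1)) (f n) := by
  rw [← hf.prev_comp_succ n, ← image_image] at h
  intro v w hvw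
  rw [← hf.prev_comp_succ n] at hvw
  exact card_image_iff.mp h (mem_image_of_mem _ (mem_univ v)) (mem_image_of_mem _ (mem_univ w)) hvw

theorem factorsThrough_of_card_le (hf : IsColorRefinement nb f) {N : ℕ}
    (hN : Fintype.card V ≤ N) : FactorsThrough (f (N + 1)) (f N) := by
  obtain ⟨n, hn, hcard⟩ := exists_le_eq_succ_of_monotone
    (monotone_nat_of_le_succ hf.card_image_le_succ) (fun n => card_image_le (s := univ) (f := f n))
  exact hf.factorsThrough_of_le (hf.factorsThrough_of_card_image_eq hcard) (hn.trans hN)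

end

end IsColorRefinement

theorem card_filter_and_eq_count_map {α β γ : Type*} [Fintype α] [DecidableEq β] [DecidableEq γ]
    (P : α → Prop) [DecidablePred P] (g : α → β) (h : α → γ) (b : β) (c : γ) :
    #{x | h x = c ∧ P x ∧ g x = b} = count (b, c) ((univ.filter P).val.map fun x => (g x, h x)) := by
  rw [count_map, filter_val, Multiset.filter_filter, card_def, filter_val]
  congr 1
  refine Multiset.filter_congr fun x _ => ?_
  rw [Prod.ext_iff]
  tauto

theorem card_filter_eq_count_map {α β : Type*} [Fintype α] [DecidableEq β] (g : α → β) (b : β) :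
    #{x | g x = b} = count b (univ.val.map g) := by
  rw [count_map, card_def, filter_val]
  simp only [eq_comm]

section FactorGraph

variable (ar : σ → ℕ) {D : Type} [Fintype D] [DecidableEq D]
  (rel : ∀ R : σ, Finset (Fin (ar R) → D))

section

omit [DecidableEq σ]

def fNbrs : D ⊕ Cstr ar rel → Multiset (FLab ar × (D ⊕ Cstr ar rel))
  | .inl a => (univ.filter fun c : Cstr ar rel => ∃ i, c.2.1 i = a).val.map
      fun c => (fLabOf ar a c, .inr c)
  | .inr c => (univ.filter fun a : D => ∃ i, c.2.1 i = a).val.map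
      fun a => (fLabOf ar a c, .inl a)

theorem isColorRefinement_fdeg : IsColorRefinement (fNbrs ar rel) (fdeg ar rel) := by
  rintro n (a | c) <;> simp only [fdeg, fNbrs, Multiset.map_map] <;> rfl

theorem initial_fdeg (n : ℕ) (v : D ⊕ Cstr ar rel) : (fdeg ar rel n v).initial = v.isRight := by
  induction n with
  | zero => cases v <;> rfl
  | succ n ih => rw [isColorRefinement_fdeg ar rel n v, ← ih]; rfl

theorem filter_map_fdeg_initial_eq_false (n : ℕ) :
    (univ.val.map (fdeg ar rel n)).filter (fun κ => κ.initial = false) =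
      univ.val.map fun a => fdeg ar rel n (.inl a) := by
  rw [← univ_disjSum_univ, val_disjSum, Multiset.disjSum, Multiset.map_add, Multiset.filter_add,
    Multiset.map_map, Multiset.map_map, Multiset.filter_eq_self.mpr, Multiset.filter_eq_nil.mpr,
    add_zero]
  · rfl
  · exact Multiset.forall_mem_map_iff.mpr fun c _ => by simp [initial_fdeg]
  · exact Multiset.forall_mem_map_iff.mpr fun a _ => initial_fdeg ar rel n (.inl a)

theorem filter_map_fdeg_initial_eq_true (n : ℕ) :
    (univ.val.map (fdeg ar rel n)).filter (fun κ => κ.initial = true) =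
      univ.val.map fun c => fdeg ar rel n (.inr c) := by
  rw [← univ_disjSum_univ, val_disjSum, Multiset.disjSum, Multiset.map_add, Multiset.filter_add,
    Multiset.map_map, Multiset.map_map, Multiset.filter_eq_nil.mpr, Multiset.filter_eq_self.mpr,
    zero_add]
  · rfl
  · exact Multiset.forall_mem_map_iff.mpr fun c _ => initial_fdeg ar rel n (.inr c)
  · exact Multiset.forall_mem_map_iff.mpr fun a _ => by simp [initial_fdeg]

end

theorem card_filter_incident_cstr (n : ℕ) (a : D) (j : FColor ar n) (ℓ : FLab ar) :
    #{c : Cstr ar rel | fdeg ar rel n (.inr c) = j ∧ (∃ i, c.2.1 i = a) ∧ fLabOf ar a c = ℓ} =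
      count (ℓ, j) (fdeg ar rel (n + 1) (.inl a)).nbrs :=
  card_filter_and_eq_count_map _ _ _ ℓ j

theorem card_filter_incident_elem (n : ℕ) (c : Cstr ar rel) (i : FColor ar n) (ℓ : FLab ar) :
    #{a : D | fdeg ar rel n (.inl a) = i ∧ (∃ i', c.2.1 i' = a) ∧ fLabOf ar a c = ℓ} =
      count (ℓ, i) (fdeg ar rel (n + 1) (.inr c)).nbrs :=
  card_filter_and_eq_count_map _ _ _ ℓ i

theorem isEquitableRel_fdeg {N : ℕ} (L : FColor ar N → FColor ar (N + 1))
    (hL : ∀ v, fdeg ar rel (N + 1) v = L (fdeg ar rel N v)) :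
    IsEquitableRel ar rel (fun a => fdeg ar rel N (.inl a)) (fun c => fdeg ar rel N (.inr c))
      (fun i j ℓ => count (ℓ, j) (L i).nbrs) (fun j i ℓ => count (ℓ, i) (L j).nbrs) :=
  ⟨fun a j ℓ => by rw [card_filter_incident_cstr, hL],
    fun c i ℓ => by rw [card_filter_incident_elem, hL]⟩

end FactorGraph

namespace SameIDS

omit [DecidableEq σ]

variable {ar : σ → ℕ} {D₁ D₂ : Type} [Fintype D₁] [DecidableEq D₁] [Fintype D₂] [DecidableEq D₂]
  {rel₁ : ∀ R : σ, Finset (Fin (ar R) → D₁)} {rel₂ : ∀ R : σ, Finset (Fin (ar R) → D₂)}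

theorem map_fdeg_inl_eq (h : SameIDS ar rel₁ rel₂) (n : ℕ) :
    univ.val.map (fun a => fdeg ar rel₁ n (.inl a)) =
      univ.val.map (fun b => fdeg ar rel₂ n (.inl b)) := by
  rw [← filter_map_fdeg_initial_eq_false, ← filter_map_fdeg_initial_eq_false, h n]

theorem map_fdeg_inr_eq (h : SameIDS ar rel₁ rel₂) (n : ℕ) :
    univ.val.map (fun c => fdeg ar rel₁ n (.inr c)) =
      univ.val.map (fun c => fdeg ar rel₂ n (.inr c)) := by
  rw [← filter_map_fdeg_initial_eq_true, ← filter_map_fdeg_initial_eq_true, h n]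

end SameIDS

/-- If two similar structures have the same iterated degree sequence, then the
partition induced by the stable iterated degrees (reached after at most
`2(|A| + |C_A| + |B| + |C_B|)` refinement rounds, as on the disjoint union) is a common
equitable partition: colouring elements and constraints by their stable iterated
degrees yields equitable partitions of both structures with the same parameters, and
every colour class contains equally many elements (resp. constraints) from the two
structures. -/
theorem stmt19 (ar : σ → ℕ) {DA DB : Type}
    [Fintype DA] [DecidableEq DA] [Fintype DB] [DecidableEq DB]
    (relA : ∀ R : σ, Finset (Fin (ar R) → DA))
    (relB : ∀ R : σ, Finset (Fin (ar R) → DB))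
    (hIDS : SameIDS ar relA relB) :
    letI N := 2 * (Fintype.card DA + Fintype.card (Cstr ar relA) +
      Fintype.card DB + Fintype.card (Cstr ar relB))
    ∃ (cpar : FColor ar N → FColor ar N → FLab ar → ℕ)
      (dpar : FColor ar N → FColor ar N → FLab ar → ℕ),
      IsEquitableRel ar relA (fun a => fdeg ar relA N (Sum.inl a))
        (fun c => fdeg ar relA N (Sum.inr c)) cpar dpar ∧
      IsEquitableRel ar relB (fun b => fdeg ar relB N (Sum.inl b))
        (fun c => fdeg ar relB N (Sum.inr c)) cpar dpar ∧
      (∀ κ : FColor ar N,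
        (Finset.univ.filter (fun a : DA => fdeg ar relA N (Sum.inl a) = κ)).card =
          (Finset.univ.filter (fun b : DB => fdeg ar relB N (Sum.inl b) = κ)).card) ∧
      (∀ κ : FColor ar N,
        (Finset.univ.filter (fun c : Cstr ar relA => fdeg ar relA N (Sum.inr c) = κ)).card =
          (Finset.univ.filter (fun c : Cstr ar relB => fdeg ar relB N (Sum.inr c) = κ)).card) := by
  set N := 2 * (Fintype.card DA + Fintype.card (Cstr ar relA) +
    Fintype.card DB + Fintype.card (Cstr ar relB))
  have hf := (isColorRefinement_fdeg ar relA).sum_elim (isColorRefinement_fdeg ar relB)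
  have hstable := hf.factorsThrough_of_card_le (N := N) (by simp only [N, Fintype.card_sum]; omega)
  obtain ⟨L, hL⟩ := (factorsThrough_iff _).mp hstable
  refine ⟨fun i j ℓ => count (ℓ, j) (L i).nbrs, fun j i ℓ => count (ℓ, i) (L j).nbrs,
    isEquitableRel_fdeg ar relA L fun v => congrFun hL (.inl v),
    isEquitableRel_fdeg ar relB L fun v => congrFun hL (.inr v),
    fun κ => ?_, fun κ => ?_⟩
  · rw [card_filter_eq_count_map, card_filter_eq_count_map, hIDS.map_fdeg_inl_eq]
  · rw [card_filter_eq_count_map, card_filter_eq_count_map, hIDS.map_fdeg_inr_eq]
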